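/- Let v = (I - γP)⁻¹ r for a right stochastic matrix P, γ ∈ [0,1), and r ∈ ℝ^S. With ρ₁, Γ₁, Γ₂ as defined (ρ₁ the scalar, Γ₁ the right stochastic matrix, Γ₂ the geometric sum ∑_{n=0}^{H-1}(γλP)ⁿ), v satisfies v = Γ₂ r + ρ₁ Γ₁ v. -/
import Mathlib


open Matrix
open scoped NNReal

attribute [local instance] Matrix.linftyOpNormedRing Matrix.linftyOpNormedAlgebra

/-- The λ-weighted H-truncated Bellman equation: `v = Γ₂ r + ρ₁ Γ₁ v`, where
`v = (I - γP)⁻¹ r`, `ρ₁ = ((1-λ)γ + (1-γ)(γλ)^H)/(1-γλ)`,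
`Γ₂ = ∑_{n=0}^{H-1}(γλP)ⁿ` and `ρ₁Γ₁ = (1-λ)γP Γ₂ + (γλP)^H`. -/
theorem stmt_5 (S : ℕ) (P : Matrix (Fin S) (Fin S) ℝ)
    (hP_nonneg : ∀ i j, 0 ≤ P i j) (hP_rows : ∀ i, ∑ j, P i j = 1)
    (γ lam : ℝ) (H : ℕ)
    (hγ0 : 0 ≤ γ) (hγ1 : γ < 1) (hlam0 : 0 ≤ lam) (hlam1 : lam ≤ 1) (hH : 1 ≤ H)
    (r v : Fin S → ℝ) (hv : v = (1 - γ • P)⁻¹ *ᵥ r)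
    (ρ₁ : ℝ) (hρ₁ : ρ₁ = ((1 - lam) * γ + (1 - γ) * (γ * lam) ^ H) / (1 - γ * lam))
    (Γ₂ Γ₁ : Matrix (Fin S) (Fin S) ℝ)
    (hΓ₂ : Γ₂ = ∑ n ∈ Finset.range H, ((γ * lam) • P) ^ n)
    (hΓ₁ : ρ₁ • Γ₁ = ((1 - lam) * γ) • (P * Γ₂) + ((γ * lam) • P) ^ H) :
    v = Γ₂ *ᵥ r + ρ₁ • (Γ₁ *ᵥ v) := by
  -- `1 - γ • P` is invertible since `‖γ • P‖ < 1` in the `L∞` operator norm.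
  have hunit : IsUnit (1 - γ • P) := by
    have hnorm : ‖γ • P‖ < 1 := by
      rw [norm_smul, Matrix.linfty_opNorm_def]
      have h1 : ((Finset.univ : Finset (Fin S)).sup fun i => ∑ j, ‖P i j‖₊ : ℝ≥0) ≤ 1 := by
        apply Finset.sup_le
        intro i _
        have : (∑ j, ‖P i j‖₊ : ℝ≥0) = 1 := by
          ext
          push_cast
          rw [← hP_rows i]
          exact Finset.sum_congr rfl fun j _ => by
            simp [Real.norm_eq_abs, abs_of_nonneg (hP_nonneg i j)]
        exact this.le
      calc ‖γ‖ * ((Finset.univ : Finset (Fin S)).sup fun i => ∑ j, ‖P i j‖₊ : ℝ≥0)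
          ≤ γ * 1 := by
            apply mul_le_mul (le_of_eq (Real.norm_of_nonneg hγ0)) ?_ ?_ hγ0
            · exact_mod_cast h1
            · positivity
        _ < 1 := by linarith
    simpa using (Units.oneSub (γ • P) hnorm).isUnit
  have hA : (1 - γ • P) *ᵥ v = r := by
    rw [hv, mulVec_mulVec, Matrix.mul_nonsing_inv _ ((Matrix.isUnit_iff_isUnit_det _).mp hunit),
      one_mulVec]
  set A : Matrix (Fin S) (Fin S) ℝ := (γ * lam) • P with hAdef
  have hc : Commute P Γ₂ := by
    rw [hΓ₂]
    exact Commute.sum_right _ _ _ fun n _ => ((Commute.refl P).smul_right (γ * lam)).pow_right n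
  have hgeo : Γ₂ * (1 - A) = 1 - A ^ H := by
    rw [hΓ₂, ← neg_sub A 1, mul_neg, geom_sum_mul, neg_sub]
  have hsplit : (1 : Matrix (Fin S) (Fin S) ℝ) - γ • P = (1 - A) - ((1 - lam) * γ) • P := by
    have h : (γ * lam) + (1 - lam) * γ = γ := by ring
    rw [sub_sub, hAdef, ← add_smul, h]
  have hid : Γ₂ * (1 - γ • P) + ρ₁ • Γ₁ = 1 := by
    have h2 : Γ₂ * (1 - γ • P) = 1 - A ^ H - ((1 - lam) * γ) • (P * Γ₂) := by
      rw [hsplit, mul_sub, hgeo, Matrix.mul_smul, hc.eq]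
    rw [h2, hΓ₁]
    abel
  calc v = (1 : Matrix (Fin S) (Fin S) ℝ) *ᵥ v := (one_mulVec v).symm
    _ = (Γ₂ * (1 - γ • P) + ρ₁ • Γ₁) *ᵥ v := by rw [hid]
    _ = Γ₂ *ᵥ r + ρ₁ • (Γ₁ *ᵥ v) := by
        rw [add_mulVec, ← mulVec_mulVec, hA, smul_mulVec]
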